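/- arXiv:1508.05461 — 3 statements merged into one kernel-verified Lean document; each statement's English description precedes it below -/
import Mathlib

section
/- If a simplicial complex C of Lawrence type Λ(C') (i.e., containing a facet with all but one vertex) has a normal binary hierarchical matrix A_{Λ(C')}, then A_{Λ(C')} is unimodular; equivalently, for matrices of Lawrence type, normality is equivalent to unimodularity. -/
open Matrix

/-- Nonnegative real cone generated by the columns of `A`. -/
def MCone {ι κ : Type*} [Fintype κ] (A : Matrix ι κ ℝ) : Set (ι → ℝ) :=
  {b | ∃ x : κ → ℝ, (∀ j, 0 ≤ x j) ∧ A.mulVec x = b}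

/-- Lattice (integer span) generated by the columns of `A`. -/
def MZSpan {ι κ : Type*} [Fintype κ] (A : Matrix ι κ ℝ) : Set (ι → ℝ) :=
  {b | ∃ z : κ → ℤ, A.mulVec (fun j => (z j : ℝ)) = b}

/-- Affine semigroup (nonnegative integer span) generated by the columns of `A`. -/
def MNSpan {ι κ : Type*} [Fintype κ] (A : Matrix ι κ ℝ) : Set (ι → ℝ) :=
  {b | ∃ x : κ → ℕ, A.mulVec (fun j => (x j : ℝ)) = b}

/-- `A` is normal if `ℤA ∩ ℝ≥0 A = ℕ A`. -/
def MNormal {ι κ : Type*} [Fintype κ] (A : Matrix ι κ ℝ) : Prop :=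
  MZSpan A ∩ MCone A = MNSpan A

/-- The polyhedron `P_{A,b} = {x : Ax = b, x ≥ 0}`. -/
def MPoly {ι κ : Type*} [Fintype κ] (A : Matrix ι κ ℝ) (b : ι → ℝ) : Set (κ → ℝ) :=
  {x | (∀ j, 0 ≤ x j) ∧ A.mulVec x = b}

/-- `A` is unimodular if for each `b ∈ ℤA ∩ ℝ≥0 A`, every vertex (extreme point)
of `P_{A,b}` is integral. -/
def MUnimodular {ι κ : Type*} [Fintype κ] (A : Matrix ι κ ℝ) : Prop :=
  ∀ b ∈ MZSpan A ∩ MCone A, ∀ x ∈ Set.extremePoints ℝ (MPoly A b), ∀ j, ∃ z : ℤ, x j = (z : ℝ)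

/-- The Lawrence lifting `Λ(A) = [[A,0],[0,A],[I,I]]` of an integer matrix. -/
def lawrenceLift {s t : ℕ} (A : Matrix (Fin s) (Fin t) ℤ) :
    Matrix ((Fin s ⊕ Fin s) ⊕ Fin t) (Fin t ⊕ Fin t) ℝ :=
  Matrix.of fun i j =>
    match i, j with
    | Sum.inl (Sum.inl i), Sum.inl j => (A i j : ℝ)
    | Sum.inl (Sum.inl _), Sum.inr _ => 0
    | Sum.inl (Sum.inr _), Sum.inl _ => 0
    | Sum.inl (Sum.inr i), Sum.inr j => (A i j : ℝ)
    | Sum.inr i, Sum.inl j => if i = j then 1 else 0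
    | Sum.inr i, Sum.inr j => if i = j then 1 else 0

/-! Unimodular ⇒ normal holds whenever the fibres `P_{A,b}` are compact, since a nonempty compact
fibre has a vertex. For normal ⇒ unimodular, let `x` be a vertex of `P_{Λ(A),b}`. The fractional
part `{x}` of `x` satisfies `Λ(A){x} ∈ ℤΛ(A) ∩ ℝ≥0Λ(A)`, so by normality `Λ(A){x} = Λ(A)p` for
some `p ∈ ℕ^{2t}`. The rows `[I, I]` force `{x}_j = 0 ⇒ p_j = 0`, so `p - {x}` is a kernel vector
supported on the support of `x`; extremality of `x` kills it, and `{x} = p` is integral. -/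

section General

variable {ι κ : Type*} [Fintype κ] {A : Matrix ι κ ℝ}

lemma mNSpan_subset_mZSpan_inter_mCone : MNSpan A ⊆ MZSpan A ∩ MCone A := by
  rintro b ⟨n, rfl⟩
  exact ⟨⟨fun j => n j, by simp⟩, ⟨fun j => n j, fun j => Nat.cast_nonneg _, rfl⟩⟩

lemma isClosed_mPoly (b : ι → ℝ) : IsClosed (MPoly A b) := by
  have hpos : IsClosed {x : κ → ℝ | ∀ j, 0 ≤ x j} := by
    simp only [Set.ofPred_forall]
    exact isClosed_iInter fun j => isClosed_le continuous_const (continuous_apply j)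
  exact hpos.inter (isClosed_eq (LinearMap.continuous_of_finiteDimensional A.mulVecLin)
    continuous_const)

lemma mNormal_of_mUnimodular (hc : ∀ b, IsCompact (MPoly A b)) (hU : MUnimodular A) :
    MNormal A := by
  refine subset_antisymm (fun b hb => ?_) mNSpan_subset_mZSpan_inter_mCone
  obtain ⟨x, hx⟩ := (hc b).extremePoints_nonempty hb.2
  choose n hn using hU b hb x hx
  refine ⟨fun j => (n j).toNat, ?_⟩
  have hcast : (fun j => ((n j).toNat : ℝ)) = x := by
    funext j
    have hn0 : 0 ≤ n j := by exact_mod_cast (hn j ▸ hx.1.1 j : (0 : ℝ) ≤ n j)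
    rw [hn j, ← Int.cast_natCast, Int.toNat_of_nonneg hn0]
  rw [hcast]
  exact hx.1.2

lemma eq_zero_of_mem_extremePoints_mPoly {b : ι → ℝ} {x d : κ → ℝ}
    (hx : x ∈ Set.extremePoints ℝ (MPoly A b)) (hd : A *ᵥ d = 0)
    (hsupp : ∀ j, x j = 0 → d j = 0) : d = 0 := by
  have hsmall : ∀ᶠ ε in nhdsWithin (0 : ℝ) (Set.Ioi 0), ∀ j, ε * |d j| ≤ x j := by
    refine Filter.eventually_all.2 fun j => ?_
    rcases (hx.1.1 j).eq_or_lt with hxj | hxj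
    · exact Filter.Eventually.of_forall fun ε => by
        rw [hsupp j hxj.symm, abs_zero, mul_zero]
        exact hxj.le
    · have hlim : Filter.Tendsto (fun ε : ℝ => ε * |d j|) (nhds 0) (nhds 0) := by
        simpa using (Filter.tendsto_id (x := nhds (0 : ℝ))).mul_const |d j|
      exact nhdsWithin_le_nhds ((hlim.eventually (gt_mem_nhds hxj)).mono fun _ => le_of_lt)
  obtain ⟨ε, hε, hεpos⟩ := (hsmall.and self_mem_nhdsWithin).exists
  have hmem : ∀ σ : ℝ, |σ| = 1 → x + σ • ε • d ∈ MPoly A b := by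
    refine fun σ hσ => ⟨fun j => ?_, by simp [mulVec_add, mulVec_smul, hd, hx.1.2]⟩
    have h := neg_abs_le (σ * (ε * d j))
    rw [abs_mul, abs_mul, hσ, abs_of_pos (Set.mem_Ioi.1 hεpos)] at h
    simp only [Pi.add_apply, Pi.smul_apply, smul_eq_mul]
    linarith [hε j]
  have hplus := hmem 1 (by simp)
  have hminus := hmem (-1) (by simp)
  rw [one_smul] at hplus
  rw [neg_one_smul, ← sub_eq_add_neg] at hminus
  have hεd : ε • d = 0 := by
    simpa using hx.2 hplus hminus (mem_openSegment_add_sub x (ε • d))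
  exact (smul_eq_zero.1 hεd).resolve_left (ne_of_gt hεpos)

end General

section Lawrence

open Sum

variable {s t : ℕ} (A : Matrix (Fin s) (Fin t) ℤ)

lemma lawrenceLift_mulVec_inr (x : Fin t ⊕ Fin t → ℝ) (k : Fin t) :
    (lawrenceLift A *ᵥ x) (inr k) = x (inl k) + x (inr k) := by
  simp [lawrenceLift, mulVec, dotProduct, Fintype.sum_sum_type, ite_mul, Finset.sum_ite_eq]

lemma isCompact_mPoly_lawrenceLift (b : (Fin s ⊕ Fin s) ⊕ Fin t → ℝ) :
    IsCompact (MPoly (lawrenceLift A) b) := by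
  refine isCompact_Icc.of_isClosed_subset (isClosed_mPoly b)
    (fun x hx => ⟨hx.1, fun j => ?_⟩ :
      MPoly (lawrenceLift A) b ⊆ Set.Icc 0 (Sum.elim (fun k => b (inr k)) fun k => b (inr k)))
  have hrow k : x (inl k) + x (inr k) = b (inr k) := by
    rw [← lawrenceLift_mulVec_inr, hx.2]
  cases j with
  | inl k => simpa using (le_add_of_nonneg_right (hx.1 (inr k))).trans_eq (hrow k)
  | inr k => simpa using (le_add_of_nonneg_left (hx.1 (inl k))).trans_eq (hrow k)

lemma eq_zero_of_natCast_add_eq_fract_add {m n : ℕ} {a c : ℝ}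
    (h : (m : ℝ) + n = Int.fract a + Int.fract c) (ha : Int.fract a = 0) : m = 0 := by
  have hlt : ((m + n : ℕ) : ℝ) < 1 := by
    push_cast
    linarith [Int.fract_lt_one c]
  have : m + n < 1 := by exact_mod_cast hlt
  omega

lemma mUnimodular_lawrenceLift_of_mNormal (hN : MNormal (lawrenceLift A)) :
    MUnimodular (lawrenceLift A) := by
  rintro b ⟨⟨z, hz⟩, -⟩ x hx j
  set f : Fin t ⊕ Fin t → ℝ := fun j => Int.fract (x j)
  have hfZ : lawrenceLift A *ᵥ f ∈ MZSpan (lawrenceLift A) := by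
    refine ⟨fun j => z j - ⌊x j⌋, ?_⟩
    have : (fun j => ((z j - ⌊x j⌋ : ℤ) : ℝ)) = (fun j => (z j : ℝ)) - x + f := by
      funext j
      simp only [f, Int.fract, Pi.add_apply, Pi.sub_apply]
      push_cast
      ring
    rw [this, mulVec_add, mulVec_sub, hz, hx.1.2, sub_self, zero_add]
  have hfC : lawrenceLift A *ᵥ f ∈ MCone (lawrenceLift A) :=
    ⟨f, fun j => Int.fract_nonneg _, rfl⟩
  obtain ⟨p, hp⟩ : lawrenceLift A *ᵥ f ∈ MNSpan (lawrenceLift A) := hN ▸ ⟨hfZ, hfC⟩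
  have hrow k : (p (inl k) : ℝ) + p (inr k) = f (inl k) + f (inr k) := by
    simpa only [lawrenceLift_mulVec_inr] using congrFun hp (inr k)
  have hpf : (fun j => (p j : ℝ)) - f = 0 := by
    refine eq_zero_of_mem_extremePoints_mPoly hx (by rw [mulVec_sub, hp, sub_self]) ?_
    intro j hxj
    have hfj : f j = 0 := by simp [f, hxj]
    have hpj : p j = 0 := by
      cases j with
      | inl k => exact eq_zero_of_natCast_add_eq_fract_add (hrow k) hfj
      | inr k =>
        exact eq_zero_of_natCast_add_eq_fract_add (by rw [add_comm, hrow k, add_comm]) hfj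
    simp [hfj, hpj]
  refine ⟨⌊x j⌋ + p j, ?_⟩
  have hfj : Int.fract (x j) = p j := (sub_eq_zero.1 (congrFun hpf j)).symm
  push_cast
  linarith [Int.floor_add_fract (x j)]

end Lawrence

/-- A matrix of Lawrence type is normal if and only if it is unimodular. -/
theorem lawrence_normal_iff_unimodular {s t : ℕ} (A : Matrix (Fin s) (Fin t) ℤ) :
    MNormal (lawrenceLift A) ↔ MUnimodular (lawrenceLift A) :=
  ⟨mUnimodular_lawrenceLift_of_mNormal A,
    mNormal_of_mUnimodular (isCompact_mPoly_lawrenceLift A)⟩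
end

section
/- With notation as in the substitution proposition: a vector u ∈ Z^{n−1} lies in the integer kernel of A' (the first n−1 columns of P_{a_n}A) if and only if there exists k ∈ Z such that A·(u,−k) = 0, i.e., (u concatenated with −k) lies in the integer kernel of A. -/
/-!
Projecting along `aₙ` kills exactly the real multiples of `aₙ`, so `A'u = 0` iff
`A(u, 0) = c • aₙ` for some real `c`. As the entries of `aₙ` are coprime, Bézout gives
`1 = ∑ gᵢ aₙᵢ`, whence `c = ∑ gᵢ A(u, 0)ᵢ` is an integer `k`; and `A(u, 0) = k • aₙ` is
`A(u, -k) = 0`.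
-/

open Matrix

/-- The orthogonal projection matrix onto the hyperplane orthogonal to `v`. -/
noncomputable def projMat {r : ℕ} (v : Fin r → ℝ) : Matrix (Fin r) (Fin r) ℝ :=
  1 - (∑ i, v i * v i)⁻¹ • Matrix.vecMulVec v v

section Projection

variable {r : ℕ}

lemma projMat_mulVec (v x : Fin r → ℝ) :
    projMat v *ᵥ x = x - ((v ⬝ᵥ v)⁻¹ * (v ⬝ᵥ x)) • v := by
  ext i
  simp only [projMat, sub_mulVec, smul_mulVec, one_mulVec, vecMulVec_mulVec, Pi.sub_apply,
    Pi.smul_apply, smul_eq_mul, op_smul_eq_mul, dotProduct]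
  ring

-- `projMat 0 = 1` because `0⁻¹ = 0`, so `v = 0` is covered as well.
lemma projMat_mulVec_eq_zero_iff (v x : Fin r → ℝ) :
    projMat v *ᵥ x = 0 ↔ ∃ c : ℝ, x = c • v := by
  rw [projMat_mulVec, sub_eq_zero]
  refine ⟨fun h => ⟨_, h⟩, ?_⟩
  rintro ⟨c, rfl⟩
  rcases eq_or_ne v 0 with rfl | hv
  · simp
  · have hvv : v ⬝ᵥ v ≠ 0 := fun h => hv (dotProduct_self_eq_zero.mp h)
    rw [dotProduct_smul, smul_eq_mul, mul_comm c, inv_mul_cancel_left₀ hvv]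

end Projection

lemma exists_intCast_smul_iff_of_gcd_eq_one {ι R : Type*} [Fintype ι] [CommRing R] [CharZero R]
    {a w : ι → ℤ} (ha : Finset.univ.gcd a = 1) :
    (∃ c : R, (fun i => (w i : R)) = c • fun i => (a i : R)) ↔ ∃ k : ℤ, w = k • a := by
  constructor
  · rintro ⟨c, hc⟩
    replace hc (i : ι) : (w i : R) = c * a i := congrFun hc i
    obtain ⟨g, hg⟩ := Finset.gcd_eq_sum_mul Finset.univ a
    rw [ha] at hg
    have hck : c = ((∑ i, w i * g i : ℤ) : R) := by
      calc c = c * ((1 : ℤ) : R) := by simp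
        _ = ((∑ i, w i * g i : ℤ) : R) := by
          rw [hg]
          simp only [Int.cast_sum, Int.cast_mul, Finset.mul_sum, hc, mul_assoc]
    exact ⟨_, funext fun i => Int.cast_injective (α := R)
      (by rw [hc, hck, Pi.smul_apply, smul_eq_mul, Int.cast_mul])⟩
  · rintro ⟨k, rfl⟩
    exact ⟨k, by ext; simp⟩

section Columns

variable {R : Type*} {d m : ℕ}

lemma of_castSucc_mulVec [NonUnitalNonAssocSemiring R] (M : Matrix (Fin d) (Fin (m + 1)) R)
    (u : Fin m → R) :
    (Matrix.of fun i (j : Fin m) => M i j.castSucc) *ᵥ u = M *ᵥ Fin.snoc u 0 := by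
  ext i
  simp [mulVec, dotProduct, Fin.sum_univ_castSucc]

lemma mulVec_snoc [CommSemiring R] (M : Matrix (Fin d) (Fin (m + 1)) R) (u : Fin m → R) (x : R) :
    M *ᵥ Fin.snoc u x = M *ᵥ Fin.snoc u 0 + x • fun i => M i (Fin.last m) := by
  ext i
  simp [mulVec, dotProduct, Fin.sum_univ_castSucc, mul_comm x]

end Columns

theorem intKer_projection_general {d m : ℕ} (A : Matrix (Fin d) (Fin (m + 1)) ℤ)
    (hgcd : Finset.univ.gcd (fun i => A i (Fin.last m)) = 1)
    (u : Fin m → ℤ) :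
    (Matrix.of fun (i : Fin d) (j : Fin m) =>
        (projMat (fun i => (A i (Fin.last m) : ℝ)) * A.map ((↑) : ℤ → ℝ)) i j.castSucc).mulVec
        (fun j => (u j : ℝ)) = 0 ↔
      ∃ k : ℤ, A.mulVec (Fin.snoc u (-k)) = 0 := by
  set a : Fin d → ℤ := fun i => A i (Fin.last m)
  set w : Fin d → ℤ := A *ᵥ Fin.snoc u 0
  have hcast : A.map ((↑) : ℤ → ℝ) *ᵥ Fin.snoc (fun j => (u j : ℝ)) 0 = fun i => (w i : ℝ) := by
    ext i
    rw [← Int.cast_zero, ← Function.comp_def, ← Fin.comp_snoc]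
    exact ((Int.castRingHom ℝ).map_mulVec A _ i).symm
  have hker : ∀ k : ℤ, A *ᵥ Fin.snoc u (-k) = 0 ↔ w = k • a := by
    intro k
    rw [mulVec_snoc, neg_smul, ← sub_eq_add_neg, sub_eq_zero]
  rw [of_castSucc_mulVec, ← mulVec_mulVec, hcast, projMat_mulVec_eq_zero_iff,
    exists_intCast_smul_iff_of_gcd_eq_one hgcd]
  simp_rw [hker]

/-- `u` lies in the integer kernel of `A'` (the first `n-1` columns of `P_{aₙ}A`) iff
`(u, -k)` lies in the integer kernel of `A` for some integer `k`. -/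
theorem intKer_projection {d m : ℕ} (A : Matrix (Fin d) (Fin (m + 1)) ℤ)
    (ha : (fun i => A i (Fin.last m)) ≠ 0)
    (hgcd : Finset.univ.gcd (fun i => A i (Fin.last m)) = 1)
    (u : Fin m → ℤ) :
    (Matrix.of fun (i : Fin d) (j : Fin m) =>
        (projMat (fun i => (A i (Fin.last m) : ℝ)) * A.map ((↑) : ℤ → ℝ)) i j.castSucc).mulVec
        (fun j => (u j : ℝ)) = 0 ↔
      ∃ k : ℤ, A.mulVec (Fin.snoc u (-k)) = 0 :=
  intKer_projection_general A hgcd u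
end

section
/- If A is normal and A' is obtained from A by deleting rows that are linearly dependent on the remaining rows (so that the row space is unchanged after composing with an injective linear map identifying the row spans), then A' is normal. Concretely: deleting a row of A that is a rational linear combination of the other rows preserves normality. -/
open Matrix

/-!
Normality only depends on the kernel of `A`: a point `A z = A x` with `z` integral and `x ≥ 0`
is in `ℕA` iff `x ≡ y (mod ker A)` for some `y ∈ ℕⁿ`. Deleting a row that is a linear
combination of the others does not change the kernel.
-/

section Kernel

variable {R ι ι' κ : Type*} [CommRing R] [Fintype κ]

theorem Matrix.mulVec_eq_mulVec_iff_of_ker_eq {A : Matrix ι κ R} {A' : Matrix ι' κ R}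
    (hker : LinearMap.ker A'.mulVecLin = LinearMap.ker A.mulVecLin) (u w : κ → R) :
    A' *ᵥ u = A' *ᵥ w ↔ A *ᵥ u = A *ᵥ w := by
  have hmem := SetLike.ext_iff.mp hker (u - w)
  simpa only [LinearMap.mem_ker, mulVecLin_apply, mulVec_sub, sub_eq_zero] using hmem

theorem Matrix.mulVec_apply_eq_sum_of_row_eq_sum {A : Matrix ι κ R} {r : ι} {s : Finset ι}
    {c : ι → R} (hdep : A r = ∑ i ∈ s, c i • A i) (v : κ → R) :
    (A *ᵥ v) r = ∑ i ∈ s, c i * (A *ᵥ v) i := by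
  simp only [mulVec, hdep, sum_dotProduct, smul_dotProduct, smul_eq_mul]

theorem Matrix.ker_mulVecLin_submatrix_succAbove {d : ℕ} (A : Matrix (Fin (d + 1)) κ R)
    (r : Fin (d + 1)) (c : Fin (d + 1) → R) (hc : c r = 0) (hdep : A r = ∑ i, c i • A i) :
    LinearMap.ker (A.submatrix r.succAbove id).mulVecLin = LinearMap.ker A.mulVecLin := by
  ext v
  simp only [LinearMap.mem_ker, mulVecLin_apply]
  refine ⟨fun hv => ?_, fun hv => funext fun k => congrFun hv (r.succAbove k)⟩
  have hrest : ∀ k, (A *ᵥ v) (r.succAbove k) = 0 := congrFun hv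
  funext i
  rcases Fin.eq_self_or_eq_succAbove r i with rfl | ⟨k, rfl⟩
  · rw [mulVec_apply_eq_sum_of_row_eq_sum hdep, Fin.sum_univ_succAbove _ i, hc]
    simp [hrest]
  · exact hrest k

end Kernel

section Normal

variable {ι ι' κ : Type*} [Fintype κ]

theorem MNSpan_subset_inter (A : Matrix ι κ ℝ) : MNSpan A ⊆ MZSpan A ∩ MCone A := by
  rintro b ⟨y, rfl⟩
  exact ⟨⟨fun j => y j, by simp⟩, fun j => y j, fun j => by positivity, rfl⟩

theorem MNormal.of_ker_eq {A : Matrix ι κ ℝ} {A' : Matrix ι' κ ℝ}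
    (hker : LinearMap.ker A'.mulVecLin = LinearMap.ker A.mulVecLin) (hA : MNormal A) :
    MNormal A' := by
  refine (Set.Subset.antisymm ?_ (MNSpan_subset_inter A'))
  rintro b ⟨⟨z, hz⟩, x, hx, rfl⟩
  have hAx : A *ᵥ x ∈ MNSpan A := by
    rw [← hA]
    exact ⟨⟨z, (mulVec_eq_mulVec_iff_of_ker_eq hker _ _).mp hz⟩, x, hx, rfl⟩
  obtain ⟨y, hy⟩ := hAx
  exact ⟨y, (mulVec_eq_mulVec_iff_of_ker_eq hker _ _).mpr hy⟩

end Normal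

/-- Deleting a row of `A` that is a rational linear combination of the other rows
preserves normality. -/
theorem normal_delete_dependent_row {d n : ℕ} (A : Matrix (Fin (d + 1)) (Fin n) ℚ)
    (r : Fin (d + 1)) (c : Fin (d + 1) → ℚ) (hc : c r = 0)
    (hdep : A r = ∑ i, c i • A i)
    (hA : MNormal (A.map ((↑) : ℚ → ℝ))) :
    MNormal ((A.submatrix (Fin.succAbove r) id).map ((↑) : ℚ → ℝ)) := by
  have hdepℝ : A.map ((↑) : ℚ → ℝ) r = ∑ i, (c i : ℝ) • A.map ((↑) : ℚ → ℝ) i := by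
    funext j
    simp [hdep, Finset.sum_apply]
  rw [← submatrix_map]
  exact hA.of_ker_eq <|
    ker_mulVecLin_submatrix_succAbove _ r (fun i => (c i : ℝ)) (by simp [hc]) hdepℝ
end
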